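/- For a letter x_c with c ≠ b, a word w_b ∈ A^b, and n ≥ 1, the regularization map satisfies the recursion reg^b(x_c w_b x_b^n) = x_c · reg^b(w_b x_b^n) − x_b · reg^b(x_c w_b x_b^{n−1}), where · denotes concatenation. -/
import Mathlib

/-- The shuffle product of two words, as a multiset of words. -/
def sh {α : Type*} : List α → List α → Multiset (List α)
  | [], w => {w}
  | u, [] => {u}
  | a :: u, b :: v => (sh u (b :: v)).map (a :: ·) + (sh (a :: u) v).map (b :: ·)
termination_by u v => u.length + v.length

/-- The shuffle product of two words as an element of the free algebra
(with ℤ coefficients, words as basis). -/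
noncomputable def shZ {α : Type*} [DecidableEq α] (u v : List α) : List α →₀ ℤ :=
  (Multiset.toFinsupp (sh u v)).mapRange Int.ofNat rfl

/-- The regularization map: `reg^b(w_b x_b^n) = Σ_{j=0}^n (−1)^j (w_b x_b^{n−j}) ⧢ x_b^j`,
where `x_b^j = x_b^{⧢ j}/j!` is the `j`-th power of the letter `x_b`. -/
noncomputable def regb {α : Type*} [DecidableEq α] (b : α) (wb : List α) (n : ℕ) :
    List α →₀ ℤ :=
  ∑ j ∈ Finset.range (n + 1),
    ((-1 : ℤ) ^ j) • shZ (wb ++ List.replicate (n - j) b) (List.replicate j b)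

lemma toFinsuppZ_map {α : Type*} [DecidableEq α] (f : List α → List α)
    (s : Multiset (List α)) :
    (Multiset.toFinsupp (s.map f)).mapRange Int.ofNat rfl =
      Finsupp.mapDomain f ((Multiset.toFinsupp s).mapRange Int.ofNat rfl) := by
  induction s using Multiset.induction with
  | empty => simp
  | cons a s ih =>
      rw [Multiset.map_cons, ← Multiset.singleton_add, ← Multiset.singleton_add,
        Multiset.toFinsupp_add, Multiset.toFinsupp_add,
        Finsupp.mapRange_add (fun _ _ => rfl), Finsupp.mapRange_add (fun _ _ => rfl),
        Finsupp.mapDomain_add, ih, Multiset.toFinsupp_singleton,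
        Multiset.toFinsupp_singleton, Finsupp.mapRange_single,
        Finsupp.mapRange_single, Finsupp.mapDomain_single]

lemma sh_nil_right {α : Type*} (u : List α) : sh u [] = {u} := by
  cases u <;> simp [sh]

lemma shZ_nil_right {α : Type*} [DecidableEq α] (u : List α) :
    shZ u [] = Finsupp.single u 1 := by
  rw [shZ, sh_nil_right, Multiset.toFinsupp_singleton, Finsupp.mapRange_single]; rfl

lemma shZ_cons_cons {α : Type*} [DecidableEq α] (a d : α) (u v : List α) :
    shZ (a :: u) (d :: v) =
      Finsupp.mapDomain (fun w => a :: w) (shZ u (d :: v)) +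
        Finsupp.mapDomain (fun w => d :: w) (shZ (a :: u) v) := by
  rw [shZ, sh, Multiset.toFinsupp_add, Finsupp.mapRange_add (fun _ _ => rfl),
    toFinsuppZ_map, toFinsuppZ_map]
  rfl

/-- For a letter `c ≠ b`, a word `w_b` not ending in `x_b`, and `n ≥ 1`:
`reg^b(x_c w_b x_b^n) = x_c · reg^b(w_b x_b^n) − x_b · reg^b(x_c w_b x_b^{n−1})`,
where `·` is concatenation on the left by a letter. -/
theorem regb_recursion {α : Type*} [DecidableEq α] (b c : α) (hc : c ≠ b)
    (wb : List α) (hwb : wb.getLast? ≠ some b) (n : ℕ) (hn : 1 ≤ n) :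
    regb b (c :: wb) n =
      Finsupp.mapDomain (fun u => c :: u) (regb b wb n) -
        Finsupp.mapDomain (fun u => b :: u) (regb b (c :: wb) (n - 1)) := by
  obtain ⟨m, rfl⟩ : ∃ m, n = m + 1 := ⟨n - 1, (Nat.succ_pred_eq_of_pos hn).symm⟩
  simp only [Nat.add_sub_cancel]
  unfold regb
  rw [Finset.sum_range_succ']
  have key : ∀ i ∈ Finset.range (m + 1),
      ((-1 : ℤ) ^ (i + 1)) •
          shZ ((c :: wb) ++ List.replicate (m + 1 - (i + 1)) b) (List.replicate (i + 1) b) =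
        ((-1 : ℤ) ^ (i + 1)) • Finsupp.mapDomain (fun w => c :: w)
            (shZ (wb ++ List.replicate (m + 1 - (i + 1)) b) (List.replicate (i + 1) b)) +
        ((-1 : ℤ) ^ (i + 1)) • Finsupp.mapDomain (fun w => b :: w)
            (shZ ((c :: wb) ++ List.replicate (m - i) b) (List.replicate i b)) := by
    intro i _
    rw [Nat.succ_sub_succ, List.replicate_succ, List.cons_append, shZ_cons_cons, smul_add]
  rw [Finset.sum_congr rfl key, Finset.sum_add_distrib]
  rw [Finsupp.mapDomain_finset_sum, Finsupp.mapDomain_finset_sum]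
  simp only [Finsupp.mapDomain_smul]
  conv_rhs => rw [Finset.sum_range_succ']
  simp only [pow_zero, one_smul, Nat.sub_zero, List.replicate_zero, shZ_nil_right,
    List.cons_append, Finsupp.mapDomain_single]
  simp only [pow_succ, mul_neg_one, neg_smul, Finset.sum_neg_distrib]
  abel
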